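/- Let k be a field, q ∈ k nonzero, Λ = k⟨x,y,z⟩/(x², y², z², yz, xy+q·yx, xz−zx, zy−zx), and C = [[Λ,0],[D(M(q)),k]]. Let U = { [[λ·yx,0],[0,0]] : λ ∈ Λ } ⊆ P₁ = Ce₁. Then U is a simple left C-module, one-dimensional over k, isomorphic to the simple top S₁ of P₁. -/

import Mathlib

/-!
Every `λ ∈ Λ` acts on `yx` through its augmentation, `λ · yx = ε(λ) yx`, and `yx` annihilates
`M(q)`; so `U = C u` with `u = [[yx, 0], [0, 0]]` is the line `k u`, and `p ↦ p u` maps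
`P₁ = C e₁` onto `U`. An element of `P₁` outside the kernel of this map has a `Λ`-entry of
nonzero augmentation, which is invertible because the augmentation ideal has vanishing cube;
so it generates `P₁`. Hence the kernel is the unique maximal submodule `rad P₁`, and
`U ≅ P₁ / rad P₁ = S₁` is simple.
-/

open MulOpposite

section Tri
variable (R S N : Type) [Ring R] [Ring S]
  [AddCommGroup N] [Module S N] [Module Rᵐᵒᵖ N] [SMulCommClass S Rᵐᵒᵖ N]

/-- Lower triangular matrix ring [[R, 0],[N, S]]: elements (r, n, s). -/
def LTri : Type := R × N × S

instance : AddCommGroup (LTri R S N) := inferInstanceAs (AddCommGroup (R × N × S))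

instance instLRing : Ring (LTri R S N) :=
  { (inferInstance : AddCommGroup (R × N × S)) with
    mul := fun x y => (x.1 * y.1, op y.1 • x.2.1 + x.2.2 • y.2.1, x.2.2 * y.2.2)
    one := (1, 0, 1)
    mul_assoc := by
      rintro ⟨r,n,s⟩ ⟨r',n',s'⟩ ⟨r'',n'',s''⟩
      refine Prod.ext (mul_assoc ..) (Prod.ext ?_ (mul_assoc ..))
      show op r'' • (op r' • n + s • n') + (s*s') • n''
          = op (r'*r'') • n + s • (op r'' • n' + s' • n'')
      simp [mul_smul, smul_add, smul_comm (M := S) (N := Rᵐᵒᵖ)]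
      abel
    one_mul := by
      rintro ⟨r,n,s⟩
      refine Prod.ext (one_mul _) (Prod.ext ?_ (one_mul _))
      show op r • (0:N) + (1:S) • n = n; simp
    mul_one := by
      rintro ⟨r,n,s⟩
      refine Prod.ext (mul_one _) (Prod.ext ?_ (mul_one _))
      show op (1:R) • n + s • (0:N) = n; simp
    left_distrib := by
      rintro ⟨r,n,s⟩ ⟨r',n',s'⟩ ⟨r'',n'',s''⟩
      refine Prod.ext (mul_add ..) (Prod.ext ?_ (mul_add ..))
      show op (r' + r'') • n + s • (n' + n'')
          = (op r' • n + s • n') + (op r'' • n + s • n'')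
      simp [smul_add, add_smul]; abel
    right_distrib := by
      rintro ⟨r,n,s⟩ ⟨r',n',s'⟩ ⟨r'',n'',s''⟩
      refine Prod.ext (add_mul ..) (Prod.ext ?_ (add_mul ..))
      show op r'' • (n + n') + (s + s') • n''
          = (op r'' • n + s • n'') + (op r'' • n' + s' • n'')
      simp [smul_add, add_smul]; abel
    zero_mul := by
      rintro ⟨r,n,s⟩
      refine Prod.ext (zero_mul _) (Prod.ext ?_ (zero_mul _))
      show op r • (0:N) + (0:S) • n = 0; simp
    mul_zero := by
      rintro ⟨r,n,s⟩
      refine Prod.ext (mul_zero _) (Prod.ext ?_ (mul_zero _))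
      show op (0:R) • n + s • (0:N) = 0; simp }

/-- Build an element of the lower triangular ring from its entries. -/
def LTri.mk (r : R) (n : N) (s : S) : LTri R S N := (r, n, s)

end Tri

/-- The defining relations of the Ringel–Zhang algebra. -/
inductive LamRel (k : Type) [Field k] (q : k) :
    FreeAlgebra k (Fin 3) → FreeAlgebra k (Fin 3) → Prop
  | x_sq : LamRel k q ((FreeAlgebra.ι k 0) * (FreeAlgebra.ι k 0)) 0
  | y_sq : LamRel k q ((FreeAlgebra.ι k 1) * (FreeAlgebra.ι k 1)) 0
  | z_sq : LamRel k q ((FreeAlgebra.ι k 2) * (FreeAlgebra.ι k 2)) 0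
  | yz : LamRel k q ((FreeAlgebra.ι k 1) * (FreeAlgebra.ι k 2)) 0
  | xy : LamRel k q ((FreeAlgebra.ι k 0) * (FreeAlgebra.ι k 1)
      + q • ((FreeAlgebra.ι k 1) * (FreeAlgebra.ι k 0))) 0
  | xz : LamRel k q ((FreeAlgebra.ι k 0) * (FreeAlgebra.ι k 2)
      - (FreeAlgebra.ι k 2) * (FreeAlgebra.ι k 0)) 0
  | zy : LamRel k q ((FreeAlgebra.ι k 2) * (FreeAlgebra.ι k 1)
      - (FreeAlgebra.ι k 2) * (FreeAlgebra.ι k 0)) 0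

/-- The Ringel–Zhang algebra Λ = k⟨x,y,z⟩/(x²,y²,z²,yz,xy+q·yx,xz−zx,zy−zx). -/
def Lam (k : Type) [Field k] (q : k) : Type := RingQuot (LamRel k q)

variable (k : Type) [Field k] (q : k)

instance : Ring (Lam k q) := inferInstanceAs (Ring (RingQuot (LamRel k q)))
instance : Algebra k (Lam k q) := inferInstanceAs (Algebra k (RingQuot (LamRel k q)))

/-- The image of the generator x in Λ. -/
def Lam.x : Lam k q := RingQuot.mkAlgHom k (LamRel k q) (FreeAlgebra.ι k 0)
/-- The image of the generator y in Λ. -/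
def Lam.y : Lam k q := RingQuot.mkAlgHom k (LamRel k q) (FreeAlgebra.ι k 1)
/-- The image of the generator z in Λ. -/
def Lam.z : Lam k q := RingQuot.mkAlgHom k (LamRel k q) (FreeAlgebra.ι k 2)

section Calg
variable (M : Type) [AddCommGroup M] [Module k M]
  [Module (Lam k q) M] [SMulCommClass (Lam k q) k M]

/-- The right Λ-module structure on D(M) = Hom_k(M,k), `(f·a)(m) = f(a·m)`. -/
noncomputable instance dualOppModule : Module (Lam k q)ᵐᵒᵖ (M →ₗ[k] k) where
  smul a f := f ∘ₗ DistribMulAction.toLinearMap k M a.unop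
  one_smul f := by ext m; show f ((1 : Lam k q) • m) = f m; simp
  mul_smul x y f := by
    ext m
    show f ((x * y).unop • m) = f (y.unop • x.unop • m)
    simp [mul_smul]
  smul_zero a := by ext m; rfl
  smul_add a f g := by ext m; rfl
  add_smul x y f := by
    ext m
    show f ((x + y).unop • m) = f (x.unop • m) + f (y.unop • m)
    simp [add_smul]
  zero_smul f := by ext m; show f ((0 : Lam k q) • m) = 0; simp

instance : SMulCommClass k (Lam k q)ᵐᵒᵖ (M →ₗ[k] k) :=
  ⟨fun c a f => by ext m; rfl⟩

/-- The triangular matrix algebra C = [[Λ, 0],[D(M), k]]. -/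
noncomputable abbrev CAlg : Type := LTri (Lam k q) k (M →ₗ[k] k)

/-- The idempotent e₁ = [[1,0],[0,0]] of C. -/
noncomputable def Ce₁ : CAlg k q M := LTri.mk _ _ _ 1 0 0
/-- The idempotent e₂ = [[0,0],[0,1]] of C. -/
noncomputable def Ce₂ : CAlg k q M := LTri.mk _ _ _ 0 0 1

end Calg

/-- The k-vector space structure on C (entrywise). -/
noncomputable instance CAlgModK (M : Type) [AddCommGroup M] [Module k M]
    [Module (Lam k q) M] [SMulCommClass (Lam k q) k M] :
    Module k (CAlg k q M) :=
  (inferInstance : Module k (Lam k q × (M →ₗ[k] k) × k))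

namespace Lam

section
variable {k q}

@[simp] theorem x_mul_x : x k q * x k q = 0 := by
  have h := RingQuot.mkAlgHom_rel k (LamRel.x_sq (q := q))
  simp only [map_mul, map_zero] at h
  exact h

@[simp] theorem y_mul_y : y k q * y k q = 0 := by
  have h := RingQuot.mkAlgHom_rel k (LamRel.y_sq (q := q))
  simp only [map_mul, map_zero] at h
  exact h

@[simp] theorem z_mul_z : z k q * z k q = 0 := by
  have h := RingQuot.mkAlgHom_rel k (LamRel.z_sq (q := q))
  simp only [map_mul, map_zero] at h
  exact h

@[simp] theorem y_mul_z : y k q * z k q = 0 := by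
  have h := RingQuot.mkAlgHom_rel k (LamRel.yz (q := q))
  simp only [map_mul, map_zero] at h
  exact h

@[simp] theorem x_mul_y : x k q * y k q = -(q • (y k q * x k q)) := by
  have h := RingQuot.mkAlgHom_rel k (LamRel.xy (q := q))
  simp only [map_add, map_mul, map_smul, map_zero] at h
  exact eq_neg_of_add_eq_zero_left h

@[simp] theorem x_mul_z : x k q * z k q = z k q * x k q := by
  have h := RingQuot.mkAlgHom_rel k (LamRel.xz (q := q))
  simp only [map_sub, map_mul, map_zero, sub_eq_zero] at h
  exact h

@[simp] theorem z_mul_y : z k q * y k q = z k q * x k q := by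
  have h := RingQuot.mkAlgHom_rel k (LamRel.zy (q := q))
  simp only [map_sub, map_mul, map_zero, sub_eq_zero] at h
  exact h

@[simp] theorem x_mul_x_mul (a : Lam k q) : x k q * (x k q * a) = 0 := by
  rw [← mul_assoc, x_mul_x, zero_mul]

@[simp] theorem y_mul_y_mul (a : Lam k q) : y k q * (y k q * a) = 0 := by
  rw [← mul_assoc, y_mul_y, zero_mul]

@[simp] theorem z_mul_z_mul (a : Lam k q) : z k q * (z k q * a) = 0 := by
  rw [← mul_assoc, z_mul_z, zero_mul]

@[simp] theorem y_mul_z_mul (a : Lam k q) : y k q * (z k q * a) = 0 := by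
  rw [← mul_assoc, y_mul_z, zero_mul]

@[simp] theorem x_mul_y_mul (a : Lam k q) :
    x k q * (y k q * a) = -(q • (y k q * (x k q * a))) := by
  rw [← mul_assoc, x_mul_y, neg_mul, smul_mul_assoc, mul_assoc]

@[simp] theorem x_mul_z_mul (a : Lam k q) : x k q * (z k q * a) = z k q * (x k q * a) := by
  rw [← mul_assoc, x_mul_z, mul_assoc]

@[simp] theorem z_mul_y_mul (a : Lam k q) : z k q * (y k q * a) = z k q * (x k q * a) := by
  rw [← mul_assoc, z_mul_y, mul_assoc]

@[elab_as_elim]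
theorem induction_on {motive : Lam k q → Prop} (a : Lam k q)
    (algebraMap : ∀ c : k, motive (algebraMap k (Lam k q) c))
    (x : motive (x k q)) (y : motive (y k q)) (z : motive (z k q))
    (add : ∀ a b, motive a → motive b → motive (a + b))
    (mul : ∀ a b, motive a → motive b → motive (a * b)) : motive a := by
  obtain ⟨a, rfl⟩ := RingQuot.mkAlgHom_surjective k (LamRel k q) a
  induction a using FreeAlgebra.induction with
  | grade0 c => rw [AlgHom.commutes]; exact algebraMap c
  | grade1 i => fin_cases i; exacts [x, y, z]
  | add a b ha hb => rw [map_add]; exact add _ _ ha hb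
  | mul a b ha hb => rw [map_mul]; exact mul _ _ ha hb

noncomputable def aug : Lam k q →ₐ[k] k :=
  RingQuot.liftAlgHom k ⟨FreeAlgebra.lift k fun _ => 0, fun _ _ h => by induction h <;> simp⟩

@[simp] theorem aug_x : aug (x k q) = 0 :=
  (RingQuot.liftAlgHom_mkAlgHom_apply k _ _ _).trans (by simp)
@[simp] theorem aug_y : aug (y k q) = 0 :=
  (RingQuot.liftAlgHom_mkAlgHom_apply k _ _ _).trans (by simp)
@[simp] theorem aug_z : aug (z k q) = 0 :=
  (RingQuot.liftAlgHom_mkAlgHom_apply k _ _ _).trans (by simp)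

theorem mul_yx (l : Lam k q) : l * (y k q * x k q) = aug l • (y k q * x k q) := by
  induction l using induction_on with
  | algebraMap c => simp [Algebra.algebraMap_eq_smul_one]
  | x | y | z => simp
  | add a b ha hb => rw [add_mul, ha, hb, map_add, add_smul]
  | mul a b ha hb => rw [mul_assoc, hb, mul_smul_comm, ha, map_mul, smul_smul, mul_comm]

open Matrix in
theorem y_mul_x_ne_zero : y k q * x k q ≠ 0 := by
  -- `Λ` maps onto `k⟨x, y⟩/(x², y², xy + q yx)` (with `z ↦ 0`), realised by 4 × 4 matrices
  let ρ : Lam k q →ₐ[k] Matrix (Fin 4) (Fin 4) k := RingQuot.liftAlgHom k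
    ⟨FreeAlgebra.lift k ![single 0 1 1 + single 2 3 1, single 0 2 1 - q • single 1 3 1, 0],
      fun _ _ h => by
        induction h <;> simp [add_mul, mul_add, sub_mul, mul_sub, single_mul_single_of_ne,
          single_mul_single_same]⟩
  have hx : ρ (x k q) = single 0 1 1 + single 2 3 1 :=
    (RingQuot.liftAlgHom_mkAlgHom_apply k _ _ _).trans (by simp)
  have hy : ρ (y k q) = single 0 2 1 - q • single 1 3 1 :=
    (RingQuot.liftAlgHom_mkAlgHom_apply k _ _ _).trans (by simp)
  have hρ : ρ (y k q * x k q) = single 0 3 1 := by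
    simp [hx, hy, mul_add, sub_mul, single_mul_single_of_ne, single_mul_single_same]
  intro h
  rw [h, map_zero] at hρ
  simpa using congrFun (congrFun hρ 0) 3

theorem exists_eq_aug_smul_one_add (a : Lam k q) : ∃ d e f g h : k,
    a = aug a • 1 + d • x k q + e • y k q + f • z k q + g • (y k q * x k q)
      + h • (z k q * x k q) := by
  induction a using induction_on with
  | algebraMap c => exact ⟨0, 0, 0, 0, 0, by simp [Algebra.algebraMap_eq_smul_one]⟩
  | x => exact ⟨1, 0, 0, 0, 0, by simp⟩
  | y => exact ⟨0, 1, 0, 0, 0, by simp⟩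
  | z => exact ⟨0, 0, 1, 0, 0, by simp⟩
  | add a b ha hb =>
      obtain ⟨d, e, f, g, h, ha⟩ := ha
      obtain ⟨d', e', f', g', h', hb⟩ := hb
      refine ⟨d + d', e + e', f + f', g + g', h + h', ?_⟩
      rw [map_add]
      nth_rw 1 [ha, hb]
      module
  | mul a b ha hb =>
      obtain ⟨d, e, f, g, h, ha⟩ := ha
      obtain ⟨d', e', f', g', h', hb⟩ := hb
      set c := aug a
      set c' := aug b
      refine ⟨c * d' + d * c', c * e' + e * c', c * f' + f * c',
        c * g' + g * c' - q * (d * e') + e * d', c * h' + h * c' + d * f' + f * d' + f * e', ?_⟩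
      rw [map_mul]
      nth_rw 1 [ha, hb]
      simp only [mul_add, add_mul, smul_mul_assoc, mul_smul_comm, one_mul, mul_one, mul_assoc,
        x_mul_x, y_mul_y, z_mul_z, y_mul_z, x_mul_y, x_mul_z, z_mul_y, y_mul_y_mul, z_mul_z_mul,
        y_mul_z_mul, x_mul_y_mul, x_mul_z_mul, z_mul_y_mul, smul_zero, smul_neg, mul_zero, mul_neg,
        add_zero]
      module

theorem pow_three_eq_zero_of_aug_eq_zero {a : Lam k q} (ha : aug a = 0) : a ^ 3 = 0 := by
  obtain ⟨d, e, f, g, h, hdec⟩ := exists_eq_aug_smul_one_add a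
  rw [ha, zero_smul, zero_add] at hdec
  rw [hdec, pow_three]
  simp [mul_add, add_mul, mul_assoc]

theorem isUnit_of_aug_ne_zero {r : Lam k q} (hr : aug r ≠ 0) : IsUnit r := by
  have hnil : IsNilpotent (r - algebraMap k (Lam k q) (aug r)) :=
    ⟨3, pow_three_eq_zero_of_aug_eq_zero (by simp)⟩
  simpa using hnil.isUnit_add_left_of_commute ((isUnit_iff_ne_zero.mpr hr).map _)
    (Algebra.commutes _ _).symm

end
end Lam

theorem setOf_isCoatom_eq_singleton {α : Type*} [PartialOrder α] [OrderTop α] {a : α}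
    (ha : a ≠ ⊤) (h : ∀ b, ¬b ≤ a → b = ⊤) : {b | IsCoatom b} = {a} := by
  have hcoatom : IsCoatom a := ⟨ha, fun b hab => h b hab.not_ge⟩
  ext b
  refine ⟨fun hb => ?_, fun hb => hb ▸ hcoatom⟩
  have hba : b ≤ a := by_contra fun hba => hb.1 (h b hba)
  exact ((hb.le_iff_eq ha).mp hba).symm

theorem Submodule.eq_top_of_mk_self_mem {R M : Type*} [Semiring R] [AddCommMonoid M] [Module R M]
    {m : M}
    {N : Submodule R (R ∙ m)} (hN : ⟨m, mem_span_singleton_self m⟩ ∈ N) : N = ⊤ := by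
  refine eq_top_iff.mpr fun ⟨p, hp⟩ _ => ?_
  obtain ⟨c, rfl⟩ := mem_span_singleton.mp hp
  exact N.smul_mem c hN

theorem LinearMap.toSpanSingleton_comp_subtype_surjective {R : Type*} [Ring R] {e u : R}
    (h : e * u = u) :
    Function.Surjective (toSpanSingleton R (R ∙ u) ⟨u, Submodule.mem_span_singleton_self u⟩
      ∘ₗ (R ∙ e).subtype) := by
  rintro ⟨v, hv⟩
  obtain ⟨c, rfl⟩ := Submodule.mem_span_singleton.mp hv
  exact ⟨⟨c * e, Submodule.mem_span_singleton.mpr ⟨c, rfl⟩⟩,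
    Subtype.ext (by simp [mul_assoc, h])⟩

namespace LTri

section
variable {R S N : Type}

theorem mk_inj {r r' : R} {n n' : N} {s s' : S} :
    mk R S N r n s = mk R S N r' n' s' ↔ r = r' ∧ n = n' ∧ s = s' :=
  Prod.mk_inj.trans (and_congr_right' Prod.mk_inj)

theorem exists_eq_mk (c : LTri R S N) : ∃ r n s, c = mk R S N r n s :=
  ⟨c.1, c.2.1, c.2.2, rfl⟩

end

variable {R S N : Type} [Ring R] [Ring S]
  [AddCommGroup N] [Module S N] [Module Rᵐᵒᵖ N] [SMulCommClass S Rᵐᵒᵖ N]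

theorem mk_eq_zero {r : R} {n : N} {s : S} : mk R S N r n s = 0 ↔ r = 0 ∧ n = 0 ∧ s = 0 :=
  mk_inj

theorem mk_mul_mk (r r' : R) (n n' : N) (s s' : S) :
    mk R S N r n s * mk R S N r' n' s' = mk R S N (r * r') (op r' • n + s • n') (s * s') := rfl

theorem mem_span_mk_one_zero_zero {p : LTri R S N} :
    p ∈ Submodule.span (LTri R S N) {mk R S N 1 0 0} ↔ ∃ r n, p = mk R S N r n 0 := by
  rw [Submodule.mem_span_singleton]
  constructor
  · rintro ⟨c, rfl⟩
    obtain ⟨r, n, s, rfl⟩ := exists_eq_mk c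
    exact ⟨r, n, by simp [smul_eq_mul, mk_mul_mk]⟩
  · rintro ⟨r, n, rfl⟩
    exact ⟨mk R S N r n 0, by simp [smul_eq_mul, mk_mul_mk]⟩

theorem mk_mul_mk_zero_zero {w : R} (hw : ∀ n : N, op w • n = 0) (r : R) (n : N) (s : S) :
    mk R S N r n s * mk R S N w 0 0 = mk R S N (r * w) 0 0 := by
  simp [mk_mul_mk, hw]

theorem mem_span_mk_zero_zero {w : R} (hw : ∀ n : N, op w • n = 0) {c : LTri R S N} :
    c ∈ Submodule.span (LTri R S N) {mk R S N w 0 0} ↔ ∃ l, c = mk R S N (l * w) 0 0 := by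
  rw [Submodule.mem_span_singleton]
  constructor
  · rintro ⟨c, rfl⟩
    obtain ⟨r, n, s, rfl⟩ := exists_eq_mk c
    exact ⟨r, mk_mul_mk_zero_zero hw r n s⟩
  · rintro ⟨l, rfl⟩
    exact ⟨mk R S N l 0 0, mk_mul_mk_zero_zero hw l 0 0⟩

end LTri

section TopOfP₁
variable (M : Type) [AddCommGroup M] [Module k M] [Module (Lam k q) M]
  [SMulCommClass (Lam k q) k M]

noncomputable def Cyx : CAlg k q M := LTri.mk _ _ _ (Lam.y k q * Lam.x k q) 0 0

/-- The projection `p ↦ p · Cyx` of `P₁ = C e₁` onto its top `U = C Cyx`. -/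
noncomputable def toU :
    Submodule.span (CAlg k q M) {Ce₁ k q M} →ₗ[CAlg k q M]
      Submodule.span (CAlg k q M) {Cyx k q M} :=
  LinearMap.toSpanSingleton _ _ ⟨Cyx k q M, Submodule.mem_span_singleton_self _⟩ ∘ₗ
    Submodule.subtype _

variable {k q M}

theorem op_smul_dual_eq_zero {a : Lam k q} (ha : ∀ m : M, a • m = 0) (f : M →ₗ[k] k) :
    op a • f = 0 := by
  ext m
  exact (congrArg f (ha m)).trans (map_zero f)

theorem Ce₁_mul_Cyx : Ce₁ k q M * Cyx k q M = Cyx k q M := by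
  simp [Ce₁, Cyx, LTri.mk_mul_mk]

theorem Cyx_ne_zero : Cyx k q M ≠ 0 :=
  fun h => Lam.y_mul_x_ne_zero (LTri.mk_eq_zero.mp h).1

theorem toU_surjective : Function.Surjective (toU k q M) :=
  LinearMap.toSpanSingleton_comp_subtype_surjective Ce₁_mul_Cyx

theorem mem_span_Cyx (hw : ∀ m : M, (Lam.y k q * Lam.x k q) • m = 0) {c : CAlg k q M} :
    c ∈ Submodule.span (CAlg k q M) {Cyx k q M} ↔
      ∃ l : Lam k q, c = LTri.mk _ _ _ (l * (Lam.y k q * Lam.x k q)) 0 0 :=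
  LTri.mem_span_mk_zero_zero (op_smul_dual_eq_zero hw)

theorem coe_toU_mk (hw : ∀ m : M, (Lam.y k q * Lam.x k q) • m = 0) {r : Lam k q}
    {n : M →ₗ[k] k} (hp : LTri.mk _ _ _ r n 0 ∈ Submodule.span (CAlg k q M) {Ce₁ k q M}) :
    (toU k q M ⟨_, hp⟩ : CAlg k q M) =
      LTri.mk _ _ _ (Lam.aug r • (Lam.y k q * Lam.x k q)) 0 0 := by
  change LTri.mk _ _ _ r n 0 * Cyx k q M = _
  rw [Cyx, LTri.mk_mul_mk_zero_zero (op_smul_dual_eq_zero hw), Lam.mul_yx]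

theorem mem_ker_toU_iff (hw : ∀ m : M, (Lam.y k q * Lam.x k q) • m = 0) {r : Lam k q}
    {n : M →ₗ[k] k} (hp : LTri.mk _ _ _ r n 0 ∈ Submodule.span (CAlg k q M) {Ce₁ k q M}) :
    ⟨_, hp⟩ ∈ LinearMap.ker (toU k q M) ↔ Lam.aug r = 0 := by
  rw [LinearMap.mem_ker, ← Submodule.coe_eq_zero, coe_toU_mk hw]
  simp [LTri.mk_eq_zero, Lam.y_mul_x_ne_zero]

theorem ker_toU_ne_top (hw : ∀ m : M, (Lam.y k q * Lam.x k q) • m = 0) :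
    LinearMap.ker (toU k q M) ≠ ⊤ := by
  have he₁ :
      ⟨Ce₁ k q M, Submodule.mem_span_singleton_self _⟩ ∉ LinearMap.ker (toU k q M) :=
    (mem_ker_toU_iff hw (r := 1) (n := 0) (Submodule.mem_span_singleton_self _)).not.mpr (by simp)
  exact fun h => he₁ (h ▸ Submodule.mem_top)

theorem eq_top_of_not_le_ker_toU (hw : ∀ m : M, (Lam.y k q * Lam.x k q) • m = 0)
    {N : Submodule (CAlg k q M) (Submodule.span (CAlg k q M) {Ce₁ k q M})}
    (hN : ¬N ≤ LinearMap.ker (toU k q M)) : N = ⊤ := by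
  obtain ⟨⟨p, hp⟩, hpN, hpker⟩ := SetLike.not_le_iff_exists.mp hN
  obtain ⟨r, n, rfl⟩ := (LTri.mem_span_mk_one_zero_zero (R := Lam k q) (S := k)).mp hp
  have hr : Lam.aug r ≠ 0 := by rwa [mem_ker_toU_iff hw] at hpker
  obtain ⟨s, hs⟩ := (Lam.isUnit_of_aug_ne_zero hr).exists_left_inv
  refine Submodule.eq_top_of_mk_self_mem ?_
  have he₁ : (LTri.mk _ _ _ s 0 0 : CAlg k q M) •
      (⟨_, hp⟩ : Submodule.span (CAlg k q M) {Ce₁ k q M}) =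
        ⟨Ce₁ k q M, Submodule.mem_span_singleton_self _⟩ :=
    Subtype.ext <| by
      change (LTri.mk _ _ _ s 0 0 : CAlg k q M) * LTri.mk _ _ _ r n 0 = LTri.mk _ _ _ 1 0 0
      simp [LTri.mk_mul_mk, hs]
  exact he₁ ▸ N.smul_mem _ hpN

theorem exists_eq_smul_Cyx (hw : ∀ m : M, (Lam.y k q * Lam.x k q) • m = 0) {c : CAlg k q M}
    (hc : c ∈ Submodule.span (CAlg k q M) {Cyx k q M}) : ∃ a : k, c = a • Cyx k q M := by
  obtain ⟨l, rfl⟩ := (mem_span_Cyx hw).mp hc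
  refine ⟨Lam.aug l, ?_⟩
  change _ = LTri.mk _ _ _ (Lam.aug l • (Lam.y k q * Lam.x k q)) (Lam.aug l • 0)
    (Lam.aug l • 0)
  rw [Lam.mul_yx, smul_zero, smul_zero]

end TopOfP₁

theorem stmt17
    (M : Type) [AddCommGroup M] [Module k M] [Module (Lam k q) M]
    [SMulCommClass (Lam k q) k M]
    (b : Module.Basis (Fin 3) k M)
    (hxv : Lam.x k q • b 0 = q • b 1)
    (hxv' : Lam.x k q • b 1 = 0) (hyv' : Lam.y k q • b 1 = 0)
    (hxv'' : Lam.x k q • b 2 = 0) :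
    ∃ V : Submodule (CAlg k q M) (CAlg k q M),
      -- V has carrier U = { [[λ·yx, 0],[0, 0]] : λ ∈ Λ },
      (V : Set (CAlg k q M))
        = {c | ∃ l : Lam k q, c = LTri.mk _ _ _ (l * (Lam.y k q * Lam.x k q)) 0 0} ∧
      -- V is a simple C-module,
      IsSimpleModule (CAlg k q M) V ∧
      -- V is one-dimensional over k,
      (∃ u₀ ∈ V, u₀ ≠ 0 ∧ ∀ c ∈ V, ∃ a : k, c = a • u₀) ∧
      -- and V is isomorphic to the simple top S₁ = P₁/rad(P₁) of P₁ = C·e₁.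
      Nonempty (V ≃ₗ[CAlg k q M]
        (Submodule.span (CAlg k q M) {Ce₁ k q M} ⧸
          sInf {m : Submodule (CAlg k q M)
            (Submodule.span (CAlg k q M) {Ce₁ k q M}) | IsCoatom m})) := by
  have hw : ∀ m : M, (Lam.y k q * Lam.x k q) • m = 0 := by
    have h : DistribSMul.toLinearMap k M (Lam.y k q * Lam.x k q) = 0 := b.ext fun i => by
      fin_cases i <;> simp [mul_smul, hxv, hxv', hxv'', hyv', smul_comm (Lam.y k q) q]
    exact LinearMap.congr_fun h
  have hcoatoms : {m | IsCoatom m} = {LinearMap.ker (toU k q M)} :=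
    setOf_isCoatom_eq_singleton (ker_toU_ne_top hw) fun _ => eq_top_of_not_le_ker_toU hw
  have : IsSimpleModule (CAlg k q M) (_ ⧸ LinearMap.ker (toU k q M)) :=
    isSimpleModule_iff_isCoatom.mpr ((Set.ext_iff.mp hcoatoms _).mpr rfl)
  let e := (toU k q M).quotKerEquivOfSurjective toU_surjective
  refine ⟨_, Set.ext fun _ => mem_span_Cyx hw, IsSimpleModule.congr e.symm,
    ⟨Cyx k q M, Submodule.mem_span_singleton_self _, Cyx_ne_zero,
      fun _ => exists_eq_smul_Cyx hw⟩, ⟨?_⟩⟩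
  rw [hcoatoms, sInf_singleton]
  exact e.symm
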